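/- Let X be a vector lattice with X~ separating points of X such that the canonical image of X is a regular sublattice of X~~. If for every net x_α in X, order convergence of x̂_α to 0 in X~~ implies order convergence of x_α to 0 in X, then X has the b-property. -/

import Mathlib

set_option linter.unusedSectionVars false
set_option maxHeartbeats 1000000

open Filter Set

section ODual

variable (E : Type*) [AddCommGroup E] [Preorder E] [Module ℝ E]

/-- The order (bounded) dual: linear functionals bounded on order intervals. -/
noncomputable def obDual : Submodule ℝ (E →ₗ[ℝ] ℝ) where
  carrier := {f | ∀ w : E, ∃ M : ℝ, ∀ x : E, -w ≤ x → x ≤ w → |f x| ≤ M}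
  zero_mem' := fun w => ⟨0, fun x _ _ => by simp⟩
  add_mem' := fun {f g} hf hg w => by
    obtain ⟨M, hM⟩ := hf w
    obtain ⟨N, hN⟩ := hg w
    refine ⟨M + N, fun x h1 h2 => ?_⟩
    calc |(f + g) x| = |f x + g x| := by simp
    _ ≤ |f x| + |g x| := abs_add_le _ _
    _ ≤ M + N := add_le_add (hM x h1 h2) (hN x h1 h2)
  smul_mem' := fun c f hf => by
    intro w
    obtain ⟨M, hM⟩ := hf w
    refine ⟨|c| * M, fun x h1 h2 => ?_⟩
    calc |(c • f) x| = |c| * |f x| := by simp [abs_mul]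
    _ ≤ |c| * M := mul_le_mul_of_nonneg_left (hM x h1 h2) (abs_nonneg c)

/-- Port helper: the additive group structure on `obDual E` (as in the older library). -/
noncomputable instance instObDualAddCommGroup : AddCommGroup (obDual E) := Submodule.addCommGroup _

/-- The pointwise-on-positive-elements (pre)order on a space of functionals. -/
instance instSubPre (Y : Submodule ℝ (E →ₗ[ℝ] ℝ)) : Preorder Y where
  le f g := ∀ x : E, 0 ≤ x → (f : E →ₗ[ℝ] ℝ) x ≤ (g : E →ₗ[ℝ] ℝ) x
  le_refl f x _ := le_rfl
  le_trans f g h h1 h2 x hx := (h1 x hx).trans (h2 x hx)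

variable {E}

theorem subPre_le_iff {Y : Submodule ℝ (E →ₗ[ℝ] ℝ)} {f g : Y} :
    f ≤ g ↔ ∀ x : E, 0 ≤ x → (f : E →ₗ[ℝ] ℝ) x ≤ (g : E →ₗ[ℝ] ℝ) x := Iff.rfl

/-- Order convergence of a net to a limit (sandwich form: eventually
`l - d ≤ x_α ≤ l + d` for every `d` in a set directed downward to `0`). -/
def OConvTo {ι : Type*} [Preorder ι] (x : ι → E) (l : E) : Prop :=
  ∃ D : Set E, D.Nonempty ∧ DirectedOn (· ≥ ·) D ∧ IsGLB D 0 ∧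
    ∀ d ∈ D, ∃ α₀ : ι, ∀ α, α₀ ≤ α → l - d ≤ x α ∧ x α ≤ l + d

/-- Order continuity of a linear functional: `f(x_α) → 0` whenever `x_α ↓ 0`. -/
def OrdContE (f : E →ₗ[ℝ] ℝ) : Prop :=
  ∀ D : Set E, D.Nonempty → DirectedOn (· ≥ ·) D → IsGLB D 0 →
    ∀ ε : ℝ, 0 < ε → ∃ d ∈ D, ∀ e ∈ D, e ≤ d → |f e| < ε

end ODual

section VL

variable (X : Type*) [Lattice X] [AddCommGroup X]
  [CovariantClass X X (· + ·) (· ≤ ·)] [Module ℝ X] [PosSMulMono ℝ X]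

variable {X} in
/-- Unbounded order convergence: `|x_α - l| ⊓ u →o 0` for every `u ≥ 0`. -/
def uoConvTo {ι : Type*} [Preorder ι] (x : ι → X) (l : X) : Prop :=
  ∀ u : X, 0 ≤ u → OConvTo (fun α => |x α - l| ⊓ u) (0 : X)

/-- The canonical evaluation of `x ∈ X` on a space `Y` of functionals on `X`. -/
def hatFun (Y : Submodule ℝ (X →ₗ[ℝ] ℝ)) (x : X) : Y →ₗ[ℝ] ℝ where
  toFun f := (f : X →ₗ[ℝ] ℝ) x
  map_add' f g := by simp
  map_smul' c f := by simp

theorem hatFun_mem (Y : Submodule ℝ (X →ₗ[ℝ] ℝ)) (x : X) :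
    hatFun X Y x ∈ obDual Y := by
  intro w
  refine ⟨(w : X →ₗ[ℝ] ℝ) (x⁺) + (w : X →ₗ[ℝ] ℝ) (x⁻), fun f h1 h2 => ?_⟩
  have hp : (0 : X) ≤ x⁺ := posPart_nonneg x
  have hn : (0 : X) ≤ x⁻ := negPart_nonneg x
  have e1 := (subPre_le_iff.mp h1) _ hp
  have e2 := (subPre_le_iff.mp h2) _ hp
  have e3 := (subPre_le_iff.mp h1) _ hn
  have e4 := (subPre_le_iff.mp h2) _ hn
  have c1 : -((w : X →ₗ[ℝ] ℝ) (x⁺)) ≤ (f : X →ₗ[ℝ] ℝ) (x⁺) := by simpa using e1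
  have c3 : -((w : X →ₗ[ℝ] ℝ) (x⁻)) ≤ (f : X →ₗ[ℝ] ℝ) (x⁻) := by simpa using e3
  have key : (f : X →ₗ[ℝ] ℝ) x
      = (f : X →ₗ[ℝ] ℝ) (x⁺) - (f : X →ₗ[ℝ] ℝ) (x⁻) := by
    rw [← map_sub, posPart_sub_negPart]
  show |(f : X →ₗ[ℝ] ℝ) x| ≤ _
  rw [key]
  have a1 : |(f : X →ₗ[ℝ] ℝ) (x⁺)| ≤ (w : X →ₗ[ℝ] ℝ) (x⁺) := abs_le.mpr ⟨c1, e2⟩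
  have a2 : |(f : X →ₗ[ℝ] ℝ) (x⁻)| ≤ (w : X →ₗ[ℝ] ℝ) (x⁻) := abs_le.mpr ⟨c3, e4⟩
  have := abs_sub ((f : X →ₗ[ℝ] ℝ) (x⁺)) ((f : X →ₗ[ℝ] ℝ) (x⁻))
  linarith

/-- The canonical embedding of `X` into the order dual of `Y ⊆ X~`. -/
def hatEl (Y : Submodule ℝ (X →ₗ[ℝ] ℝ)) (x : X) : obDual Y :=
  ⟨hatFun X Y x, hatFun_mem X Y x⟩

/-- `X~` separates the points of `X`. -/
def SepPoints : Prop := ∀ x : X, x ≠ 0 → ∃ f : obDual X, (f : X →ₗ[ℝ] ℝ) x ≠ 0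

/-- The canonical image of `X` in `X~~` is a regular sublattice:
`x_α ↓ 0` in `X` implies `x̂_α ↓ 0` in `X~~`. -/
def HatRegular : Prop :=
  ∀ D : Set X, D.Nonempty → DirectedOn (· ≥ ·) D → IsGLB D 0 →
    IsGLB (hatEl X (obDual X) '' D) (0 : obDual ↥(obDual X))

variable {X} in
/-- The net `x̂_α` is eventually order bounded in `X~~`. -/
def HatEvOB {ι : Type*} [Preorder ι] (x : ι → X) : Prop :=
  ∃ (b t : obDual ↥(obDual X)) (α₀ : ι), ∀ α, α₀ ≤ α →
    b ≤ hatEl X (obDual X) (x α) ∧ hatEl X (obDual X) (x α) ≤ t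

variable {X} in
/-- Bidual bounded uo-convergence. -/
def bbuoConvTo {ι : Type*} [Preorder ι] (x : ι → X) (l : X) : Prop :=
  uoConvTo x l ∧ HatEvOB x

/-- `X` has the `b`-property: every subset of `X` whose canonical image is
order bounded in `X~~` is order bounded in `X`. -/
def HasBProp : Prop :=
  ∀ A : Set X,
    (∃ b t : obDual ↥(obDual X), ∀ a ∈ A,
        b ≤ hatEl X (obDual X) a ∧ hatEl X (obDual X) a ≤ t) →
    ∃ b t : X, ∀ a ∈ A, b ≤ a ∧ a ≤ t

/-- The Archimedean property for a lattice-ordered group. -/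
def IsArch : Prop := ∀ x y : X, 0 ≤ x → (∀ n : ℕ, n • x ≤ y) → x = 0

end VL

/-!
Let `â ∈ [b, t]` for all `a ∈ A` and fix `a₀ ∈ A`. The net `(n + 1)⁻¹ • (a - a₀)`, indexed by
`A × ℕ` but directed by `n` alone, has image dominated by `(n + 1)⁻¹ • (t - b)` in `X~~`, so it
order converges to `0` there, hence in `X`. A single tail bound `d`, reached at some level `n₀`,
then holds for every `a ∈ A` at level `n₀`, which puts `A` in `a₀ + [-(n₀ + 1) • d, (n₀ + 1) • d]`.
-/

section Embedding

variable {X : Type*} [Lattice X] [AddCommGroup X]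
  [CovariantClass X X (· + ·) (· ≤ ·)] [Module ℝ X] [PosSMulMono ℝ X]
  (Y : Submodule ℝ (X →ₗ[ℝ] ℝ))

theorem hatEl_sub (x y : X) : hatEl X Y (x - y) = hatEl X Y x - hatEl X Y y := by
  ext f
  simp [hatEl, hatFun]

theorem hatEl_smul (c : ℝ) (x : X) : hatEl X Y (c • x) = c • hatEl X Y x := by
  ext f
  simp [hatEl, hatFun]

end Embedding

def ByLevel (S : Type*) : Type _ := S × ℕ

namespace ByLevel

instance (S : Type*) : Preorder (ByLevel S) := Preorder.lift fun p : S × ℕ => p.2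

instance (S : Type*) [Nonempty S] : Nonempty (ByLevel S) :=
  ⟨(Classical.arbitrary S, 0)⟩

instance (S : Type*) : IsDirected (ByLevel S) (· ≤ ·) :=
  ⟨fun p q => ⟨(p.1, max p.2 q.2), le_max_left p.2 q.2, le_max_right p.2 q.2⟩⟩

end ByLevel

section FunctionalOrder

variable {E : Type*} [AddCommGroup E] [Preorder E] [Module ℝ E] {Y : Submodule ℝ (E →ₗ[ℝ] ℝ)}

theorem apply_nonneg_of_nonneg {w : Y} (hw : 0 ≤ w) {x : E} (hx : 0 ≤ x) :
    0 ≤ (w : E →ₗ[ℝ] ℝ) x := by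
  simpa using hw x hx

theorem sub_mem_Icc_of_mem_Icc {b t u v : Y} (hu : u ∈ Icc b t) (hv : v ∈ Icc b t) :
    u - v ∈ Icc (-(t - b)) (t - b) := by
  constructor <;> intro x hx
  · have := hu.1 x hx; have := hv.2 x hx
    simp only [Submodule.coe_neg, Submodule.coe_sub, LinearMap.neg_apply,
      LinearMap.sub_apply] at *
    linarith
  · have := hu.2 x hx; have := hv.1 x hx
    simp only [Submodule.coe_sub, LinearMap.sub_apply] at *
    linarith

theorem antitone_inv_succ_smul {w : Y} (hw : 0 ≤ w) :
    Antitone fun n : ℕ => ((n : ℝ) + 1)⁻¹ • w := by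
  intro m n hmn x hx
  simp only [Submodule.coe_smul, LinearMap.smul_apply, smul_eq_mul]
  gcongr
  exact apply_nonneg_of_nonneg hw hx

theorem isGLB_range_inv_succ_smul {w : Y} (hw : 0 ≤ w) :
    IsGLB (range fun n : ℕ => ((n : ℝ) + 1)⁻¹ • w) 0 := by
  refine ⟨?_, fun c hc x hx => ?_⟩
  · rintro _ ⟨n, rfl⟩ x hx
    simpa using mul_nonneg (by positivity) (apply_nonneg_of_nonneg hw hx)
  · have hlim : Tendsto (fun n : ℕ => ((n : ℝ) + 1)⁻¹ * (w : E →ₗ[ℝ] ℝ) x) atTop (nhds 0) := by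
      simpa using tendsto_one_div_add_atTop_nhds_zero_nat.mul_const ((w : E →ₗ[ℝ] ℝ) x)
    simpa using ge_of_tendsto' hlim fun n => by simpa using hc ⟨n, rfl⟩ x hx

theorem oConvTo_zero_of_mem_Icc_inv_succ_smul {ι : Type*} [Preorder ι] {x : ι → Y} {w : Y}
    (hw : 0 ≤ w)
    (h : ∀ n : ℕ, ∃ α₀, ∀ α, α₀ ≤ α → x α ∈ Icc (-(((n : ℝ) + 1)⁻¹ • w)) (((n : ℝ) + 1)⁻¹ • w)) :
    OConvTo x 0 :=
  ⟨_, range_nonempty _, directedOn_range.2 (antitone_inv_succ_smul hw).directed_ge,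
    isGLB_range_inv_succ_smul hw, by
      rintro _ ⟨n, rfl⟩
      obtain ⟨α₀, hα₀⟩ := h n
      exact ⟨α₀, fun α hα =>
        ⟨(zero_sub (((n : ℝ) + 1)⁻¹ • w)).trans_le (hα₀ α hα).1,
          (hα₀ α hα).2.trans_eq (zero_add (((n : ℝ) + 1)⁻¹ • w)).symm⟩⟩⟩

theorem oConvTo_byLevel_inv_succ_smul {S : Type*} [Nonempty S] {y : S → Y} {w : Y}
    (hy : ∀ s, y s ∈ Icc (-w) w) :
    OConvTo (fun p : ByLevel S => ((p.2 : ℝ) + 1)⁻¹ • y p.1) 0 := by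
  obtain ⟨s₀⟩ := ‹Nonempty S›
  have hw : 0 ≤ w := fun x hx => by
    have := (hy s₀).1.trans (hy s₀).2 x hx
    simp only [Submodule.coe_neg, LinearMap.neg_apply, Submodule.coe_zero,
      LinearMap.zero_apply] at this ⊢
    linarith
  refine oConvTo_zero_of_mem_Icc_inv_succ_smul hw fun n => ⟨(s₀, n), ?_⟩
  rintro ⟨s, m⟩ (hnm : n ≤ m)
  have hwy : ∀ x : E, 0 ≤ x →
      |((m : ℝ) + 1)⁻¹ * (y s : E →ₗ[ℝ] ℝ) x| ≤ ((n : ℝ) + 1)⁻¹ * (w : E →ₗ[ℝ] ℝ) x := by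
    intro x hx
    have hyx : |(y s : E →ₗ[ℝ] ℝ) x| ≤ (w : E →ₗ[ℝ] ℝ) x :=
      abs_le.2 ⟨by simpa using (hy s).1 x hx, (hy s).2 x hx⟩
    rw [abs_mul, abs_of_pos (by positivity)]
    gcongr
  constructor <;> intro x hx
  · simpa using neg_le_of_abs_le (hwy x hx)
  · simpa using le_of_abs_le (hwy x hx)

end FunctionalOrder

theorem exists_Icc_bound_of_oConvTo_byLevel_inv_succ_smul {X S : Type*} [AddCommGroup X]
    [PartialOrder X] [IsOrderedAddMonoid X] [Module ℝ X] [PosSMulMono ℝ X] {y : S → X}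
    (h : OConvTo (fun p : ByLevel S => ((p.2 : ℝ) + 1)⁻¹ • y p.1) 0) :
    ∃ d : X, ∀ s, y s ∈ Icc (-d) d := by
  obtain ⟨D, ⟨d, hd⟩, -, -, hconv⟩ := h
  obtain ⟨α₀, hα₀⟩ := hconv d hd
  have hc : (0 : ℝ) < (α₀.2 : ℝ) + 1 := by positivity
  refine ⟨((α₀.2 : ℝ) + 1) • d, fun s => ?_⟩
  obtain ⟨h₁, h₂⟩ := hα₀ (s, α₀.2) (le_refl α₀.2)
  simp only [zero_sub, zero_add] at h₁ h₂
  exact ⟨by rwa [← smul_neg, ← le_inv_smul_iff_of_pos hc], (inv_smul_le_iff_of_pos hc).1 h₂⟩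


theorem statement13_general {X : Type u} [Lattice X] [AddCommGroup X]
    [CovariantClass X X (· + ·) (· ≤ ·)] [Module ℝ X] [PosSMulMono ℝ X]
    (hyp : ∀ (κ : Type u) [Preorder κ] [Nonempty κ] [IsDirected κ (· ≤ ·)]
      (x : κ → X),
      OConvTo (fun α => hatEl X (obDual X) (x α)) 0 → OConvTo x 0) :
    HasBProp X := by
  rintro A ⟨b, t, hbt⟩
  rcases A.eq_empty_or_nonempty with rfl | ⟨a₀, ha₀⟩
  · exact ⟨0, 0, by simp⟩
  have : Nonempty A := ⟨⟨a₀, ha₀⟩⟩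
  have hhat : OConvTo (fun p : ByLevel A =>
      hatEl X (obDual X) (((p.2 : ℝ) + 1)⁻¹ • ((p.1 : X) - a₀))) 0 := by
    simp only [hatEl_smul, hatEl_sub]
    exact oConvTo_byLevel_inv_succ_smul (y := fun a : A => hatEl X _ a - hatEl X _ a₀)
      fun a => sub_mem_Icc_of_mem_Icc (hbt a a.2) (hbt a₀ ha₀)
  have : IsOrderedAddMonoid X := { add_le_add_left := fun _ _ h c => add_le_add_left h c }
  obtain ⟨d, hd⟩ := exists_Icc_bound_of_oConvTo_byLevel_inv_succ_smul
    (y := fun a : A => (a : X) - a₀) (hyp _ _ hhat)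
  refine ⟨a₀ - d, a₀ + d, fun a ha => ?_⟩
  obtain ⟨h₁, h₂⟩ := hd ⟨a, ha⟩
  exact ⟨sub_le_iff_le_add.2 (neg_le_sub_iff_le_add.1 h₁), sub_le_iff_le_add'.1 h₂⟩

/-- If the canonical image of `X` is regular in `X~~` and order convergence of
`x̂_α` to `0` in `X~~` always implies order convergence of `x_α` to `0` in `X`,
then `X` has the `b`-property. -/
theorem statement13 {X : Type u} [Lattice X] [AddCommGroup X]
    [CovariantClass X X (· + ·) (· ≤ ·)] [Module ℝ X] [PosSMulMono ℝ X]
    (harch : IsArch X)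
    (hsep : SepPoints X) (hreg : HatRegular X)
    (hyp : ∀ (κ : Type u) [Preorder κ] [Nonempty κ] [IsDirected κ (· ≤ ·)]
      (x : κ → X),
      OConvTo (fun α => hatEl X (obDual X) (x α)) 0 → OConvTo x 0) :
    HasBProp X :=
  statement13_general hyp
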